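/- arXiv:1905.08427 — 7 statements merged into one kernel-verified Lean document; each statement's English description precedes it below -/
import Mathlib

section
/- If 𝒜₀ ⊇ 𝒜₁ ⊇ 𝒜₂ ⊇ … is a decreasing sequence of largeness classes over I → 2^ω, then the intersection ⋂_s 𝒜_s is a largeness class. -/
/-- A class of `I`-tuples of subsets of ℕ is upward closed if it is closed under
componentwise superset. -/
def UpwardClosed {ι : Type} (A : Set (ι → Set ℕ)) : Prop :=
  ∀ X Y : ι → Set ℕ, X ∈ A → (∀ ν, X ν ⊆ Y ν) → Y ∈ A

/-- A largeness class over `ι → 2^ω`: upward closed, and for every finite cover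
`Y₀ ∪ … ∪ Y_{k−1} = ℕ` there is an assignment `⟨j_ν < k : ν ∈ ι⟩` with
`⟨Y_{j_ν} : ν ∈ ι⟩` in the class. -/
def IsLargenessClass {ι : Type} (A : Set (ι → Set ℕ)) : Prop :=
  UpwardClosed A ∧
    ∀ (k : ℕ) (Y : Fin k → Set ℕ), (⋃ j, Y j) = Set.univ →
      ∃ f : ι → Fin k, (fun ν => Y (f ν)) ∈ A

/-- If `𝒜₀ ⊇ 𝒜₁ ⊇ 𝒜₂ ⊇ …` is a decreasing sequence of largeness classes over
`I → 2^ω` (with `I` finite), then `⋂ s, 𝒜 s` is a largeness class. -/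
theorem stmt_0 {ι : Type} [Fintype ι] (A : ℕ → Set (ι → Set ℕ))
    (hdec : ∀ s, A (s + 1) ⊆ A s) (hlarge : ∀ s, IsLargenessClass (A s)) :
    IsLargenessClass (⋂ s, A s) := by
  have hmono : ∀ s t, s ≤ t → A t ⊆ A s := by
    intro s t hst
    induction t with
    | zero => simp_all
    | succ n ih =>
      rcases Nat.lt_or_ge s (n + 1) with h | h
      · exact (hdec n).trans (ih (Nat.lt_succ_iff.mp h))
      · have : s = n + 1 := le_antisymm hst h
        subst this; exact subset_rfl
  constructor
  · intro X Y hX hXY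
    simp only [Set.mem_iInter] at hX ⊢
    intro s
    exact (hlarge s).1 X Y (hX s) hXY
  · intro k Y hY
    -- for each s choose a witness
    choose g hg using fun s => (hlarge s).2 k Y hY
    obtain ⟨f, hf⟩ := Finite.exists_infinite_fiber g
    refine ⟨f, ?_⟩
    simp only [Set.mem_iInter]
    intro s
    obtain ⟨t, htmem, hts⟩ := (Set.infinite_coe_iff.mp hf).exists_gt s
    have : g t = f := htmem
    exact hmono s t hts.le (this ▸ hg t)
end

section
/- If 𝒜 ∩ ℒ_{⟨X_ν : ν ∈ I⟩} ∩ ℒ_{⟨Y_ν : ν ∈ I⟩} is a largeness class, then so is 𝒜 ∩ ℒ_{⟨X_ν ∩ Y_ν : ν ∈ I⟩}. -/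
/-- `ℒ_{⟨X_ν⟩}`: the class of tuples `⟨Y_ν⟩` with each `Y_ν ∩ X_ν` infinite. -/
def Lcal {ι : Type} (X : ι → Set ℕ) : Set (ι → Set ℕ) :=
  {Y | ∀ ν, (Y ν ∩ X ν).Infinite}

/-- If `𝒜 ∩ ℒ_{⟨X_ν⟩} ∩ ℒ_{⟨Y_ν⟩}` is a largeness class, then so is
`𝒜 ∩ ℒ_{⟨X_ν ∩ Y_ν⟩}`. -/
theorem stmt_5 {ι : Type} [Fintype ι] (A : Set (ι → Set ℕ)) (X Y : ι → Set ℕ)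
    (h : IsLargenessClass (A ∩ Lcal X ∩ Lcal Y)) :
    IsLargenessClass (A ∩ Lcal fun ν => X ν ∩ Y ν) := by
  classical
  obtain ⟨hup, hcov⟩ := h
  constructor
  · -- upward closed
    rintro B C ⟨hBA, hBL⟩ hBC
    have hCL : C ∈ Lcal fun ν => X ν ∩ Y ν := by
      intro ν
      exact (hBL ν).mono (fun n hn => ⟨hBC ν hn.1, hn.2⟩)
    have hB' : B ∈ A ∩ Lcal X ∩ Lcal Y :=
      ⟨⟨hBA, fun ν => (hBL ν).mono (fun n hn => ⟨hn.1, hn.2.1⟩)⟩,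
        fun ν => (hBL ν).mono (fun n hn => ⟨hn.1, hn.2.2⟩)⟩
    exact ⟨(hup B C hB' hBC).1.1, hCL⟩
  · intro k Z hZ
    set T := Fin k × (ι → Bool) with hT
    set W : T → Set ℕ := fun t => Z t.1 ∩ {n | ∀ ν, (n ∈ Y ν ↔ t.2 ν = true)} with hW
    have hWcov : (⋃ t : T, W t) = Set.univ := by
      ext n
      simp only [Set.mem_iUnion, Set.mem_univ, iff_true]
      have hn : n ∈ ⋃ j, Z j := hZ ▸ Set.mem_univ n
      obtain ⟨j, hj⟩ := Set.mem_iUnion.1 hn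
      exact ⟨(j, fun ν => decide (n ∈ Y ν)), hj, fun ν => by simp⟩
    let e := Fintype.equivFin T
    have hcov' : (⋃ i, W (e.symm i)) = Set.univ := by
      ext n
      simp only [Set.mem_iUnion, Set.mem_univ, iff_true]
      have hn : n ∈ ⋃ t : T, W t := hWcov ▸ Set.mem_univ n
      obtain ⟨t, ht⟩ := Set.mem_iUnion.1 hn
      exact ⟨e t, by simpa using ht⟩
    obtain ⟨f, hf⟩ := hcov (Fintype.card T) (fun i => W (e.symm i)) hcov'
    set p : ι → T := fun ν => e.symm (f ν) with hp
    obtain ⟨⟨hA, hX⟩, hY⟩ := hf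
    -- each chosen piece lies inside the corresponding Y ν
    have hsub : ∀ ν, W (p ν) ⊆ Y ν := by
      intro ν
      obtain ⟨n, hnW, hnY⟩ := (hY ν).nonempty
      have htrue : (p ν).2 ν = true := (hnW.2 ν).1 hnY
      intro m hm
      exact (hm.2 ν).2 htrue
    refine ⟨fun ν => (p ν).1, ?_, ?_⟩
    · -- membership in A
      have : (fun ν => Z ((p ν).1)) ∈ A ∩ Lcal X ∩ Lcal Y :=
        hup (fun ν => W (p ν)) (fun ν => Z ((p ν).1)) ⟨⟨hA, hX⟩, hY⟩
          (fun ν => Set.inter_subset_left)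
      exact this.1.1
    · -- membership in Lcal (X ∩ Y)
      intro ν
      refine (hX ν).mono ?_
      intro n hn
      exact ⟨hn.1.1, hn.2, hsub ν hn.1⟩
end

section
/- If 𝒜 ⊆ (I → 2^ω) is a largeness class and J ⊆ I, then the projection π_J(𝒜) is a largeness class over J → 2^ω. -/
/-- Combine a tuple indexed by `J = {ν // p ν}` with one indexed by the
complement `I − J = {ν // ¬ p ν}` into a tuple indexed by `I = ι`. -/
def combineTuple {ι : Type} (p : ι → Prop) [DecidablePred p]
    (XJ : {ν // p ν} → Set ℕ) (XC : {ν // ¬ p ν} → Set ℕ) : ι → Set ℕ :=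
  fun ν => if h : p ν then XJ ⟨ν, h⟩ else XC ⟨ν, h⟩

/-- The projection `π_J(𝒜)`: tuples `⟨X_ν : ν ∈ J⟩` such that the class of
completions `⟨X_ν : ν ∈ I − J⟩` with combined tuple in `𝒜` is a largeness class. -/
def projClass {ι : Type} (p : ι → Prop) [DecidablePred p]
    (A : Set (ι → Set ℕ)) : Set ({ν // p ν} → Set ℕ) :=
  {XJ | IsLargenessClass {XC : {ν // ¬ p ν} → Set ℕ | combineTuple p XJ XC ∈ A}}

/-- If `𝒜 ⊆ (I → 2^ω)` is a largeness class and `J ⊆ I`, then `π_J(𝒜)` is a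
largeness class over `J → 2^ω`. -/
theorem stmt_6 {ι : Type} [Fintype ι] (p : ι → Prop) [DecidablePred p]
    (A : Set (ι → Set ℕ)) (hA : IsLargenessClass A) :
    IsLargenessClass (projClass p A) := by
  classical
  obtain ⟨hup, hcov⟩ := hA
  have Bup : ∀ XJ : {ν // p ν} → Set ℕ,
      UpwardClosed {XC : {ν // ¬ p ν} → Set ℕ | combineTuple p XJ XC ∈ A} := by
    intro XJ XC YC h hle
    refine hup _ _ h ?_
    intro ν
    unfold combineTuple
    by_cases hν : p ν
    · simp [hν]
    · simpa [hν] using hle ⟨ν, hν⟩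
  constructor
  · intro XJ YJ hXJ hle
    obtain ⟨_, hXJ2⟩ := hXJ
    refine ⟨Bup YJ, ?_⟩
    intro k Y hY
    obtain ⟨f, hf⟩ := hXJ2 k Y hY
    refine ⟨f, hup _ _ hf ?_⟩
    intro ν
    unfold combineTuple
    by_cases hν : p ν
    · simpa [hν] using hle ⟨ν, hν⟩
    · simp [hν]
  · intro k Y hY
    by_contra hcon
    push_neg at hcon
    have hfail : ∀ f : {ν // p ν} → Fin k, ∃ m, ∃ Z : Fin m → Set ℕ,
        (⋃ j, Z j) = Set.univ ∧
        ∀ g : {ν // ¬ p ν} → Fin m,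
          combineTuple p (fun ν => Y (f ν)) (fun ν => Z (g ν)) ∉ A := by
      intro f
      have h1 := hcon f
      rw [projClass, Set.mem_setOf_eq, IsLargenessClass] at h1
      push_neg at h1
      obtain ⟨m, Z, hZc, hZn⟩ := h1 (Bup _)
      exact ⟨m, Z, hZc, fun g hg => hZn g hg⟩
    choose m Z hZcov hZ using hfail
    set T := Fin k × (∀ f : {ν // p ν} → Fin k, Fin (m f)) with hT
    obtain ⟨e⟩ : Nonempty (Fin (Fintype.card T) ≃ T) := ⟨(Fintype.equivFin T).symm⟩
    set W : Fin (Fintype.card T) → Set ℕ :=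
      fun i => Y (e i).1 ∩ ⋂ f, Z f ((e i).2 f) with hW
    have hWcov : (⋃ i, W i) = Set.univ := by
      ext n
      simp only [Set.mem_iUnion, Set.mem_univ, iff_true]
      have hj : ∃ j, n ∈ Y j := by
        have := hY.symm ▸ Set.mem_univ n
        simpa using this
      obtain ⟨j, hj⟩ := hj
      have hf : ∀ f : {ν // p ν} → Fin k, ∃ h, n ∈ Z f h := by
        intro f
        have := (hZcov f).symm ▸ Set.mem_univ n
        simpa using this
      choose hh hhn using hf
      refine ⟨e.symm (j, hh), ?_⟩
      simp only [hW, Equiv.apply_symm_apply, Set.mem_inter_iff, Set.mem_iInter]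
      exact ⟨hj, hhn⟩
    obtain ⟨F, hF⟩ := hcov _ W hWcov
    set f0 : {ν // p ν} → Fin k := fun ν => (e (F ν.1)).1 with hf0
    refine hZ f0 (fun ν => (e (F ν.1)).2 f0) (hup _ _ hF ?_)
    intro ν
    unfold combineTuple
    by_cases hν : p ν
    · simp only [dif_pos hν]
      intro x hx
      exact hx.1
    · simp only [dif_neg hν]
      intro x hx
      exact Set.mem_iInter.mp hx.2 f0
end

section
/- The class { ⟨X, Y⟩ : X ∩ Y is infinite } is a largeness class over 2^ω × 2^ω, but it is not contained in (hence not equal to) any cartesian product 𝒜 × ℬ of two largeness classes over 2^ω contained in it. In particular, it is a largeness class over 2^ω × 2^ω that is not a cartesian product of two largeness classes. -/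
/-- A largeness class over `2^ω` (singleton index set): upward closed under `⊆`,
and every finite cover `Y₀ ∪ … ∪ Y_{k−1} = ℕ` has some member in the class. -/
def IsLargenessClass1 (A : Set (Set ℕ)) : Prop :=
  (∀ X Y : Set ℕ, X ∈ A → X ⊆ Y → Y ∈ A) ∧
    ∀ (k : ℕ) (Y : Fin k → Set ℕ), (⋃ j, Y j) = Set.univ → ∃ j, Y j ∈ A

/-- A largeness class over `2^ω × 2^ω`. -/
def IsLargenessClass2 (C : Set (Set ℕ × Set ℕ)) : Prop :=
  (∀ P Q : Set ℕ × Set ℕ, P ∈ C → P.1 ⊆ Q.1 → P.2 ⊆ Q.2 → Q ∈ C) ∧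
    ∀ (k : ℕ) (Y : Fin k → Set ℕ), (⋃ j, Y j) = Set.univ →
      ∃ j₀ j₁, (Y j₀, Y j₁) ∈ C

/-- `{⟨X, Y⟩ : X ∩ Y infinite}` is a largeness class over `2^ω × 2^ω`, but it is
not contained in (hence not equal to) any cartesian product `𝒜 × ℬ` of two
largeness classes over `2^ω` contained in it. -/
theorem stmt_8 :
    IsLargenessClass2 {P : Set ℕ × Set ℕ | (P.1 ∩ P.2).Infinite} ∧
      ∀ A B : Set (Set ℕ), IsLargenessClass1 A → IsLargenessClass1 B →
        A ×ˢ B ⊆ {P : Set ℕ × Set ℕ | (P.1 ∩ P.2).Infinite} →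
        ¬ {P : Set ℕ × Set ℕ | (P.1 ∩ P.2).Infinite} ⊆ A ×ˢ B := by
  constructor
  · constructor
    · rintro ⟨X₁, X₂⟩ ⟨Y₁, Y₂⟩ h h1 h2
      exact h.mono (Set.inter_subset_inter h1 h2)
    · intro k Y hY
      by_contra hc
      push_neg at hc
      have hfin : ∀ j, (Y j).Finite := by
        intro j
        by_contra hf
        exact hc j j (by simpa [Set.inter_self] using (show (Y j).Infinite from hf))
      have : (⋃ j, Y j).Finite := Set.finite_iUnion hfin
      rw [hY] at this
      exact Set.infinite_univ this
  · intro A B hA hB hsub hCsub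
    set E : Set ℕ := {n | Even n}
    set O : Set ℕ := {n | ¬ Even n}
    have hEinf : E.Infinite :=
      Set.infinite_of_injective_forall_mem (f := fun n : ℕ => 2 * n)
        (fun a b h => by simpa using h) (fun n => ⟨n, by ring⟩)
    have hOinf : O.Infinite :=
      Set.infinite_of_injective_forall_mem (f := fun n : ℕ => 2 * n + 1)
        (fun a b h => by simpa using h) (fun n => by simp [O, Nat.even_add_one, parity_simps])
    have hE : (E, E) ∈ {P : Set ℕ × Set ℕ | (P.1 ∩ P.2).Infinite} := by
      simpa [Set.inter_self] using hEinf
    have hO : (O, O) ∈ {P : Set ℕ × Set ℕ | (P.1 ∩ P.2).Infinite} := by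
      simpa [Set.inter_self] using hOinf
    have hEA : E ∈ A := (hCsub hE).1
    have hOB : O ∈ B := (hCsub hO).2
    have : ((E, O) : Set ℕ × Set ℕ) ∈ {P : Set ℕ × Set ℕ | (P.1 ∩ P.2).Infinite} :=
      hsub ⟨hEA, hOB⟩
    have hempty : E ∩ O = ∅ := by
      ext n; simp [E, O]
    rw [Set.mem_setOf_eq] at this
    simp only [hempty] at this
    exact this Set.finite_empty
end

section
/- For every n and every 2-cover B₀ ∪ B₁ = 𝓘_n, there is an n-index I ⊆ 𝓘_n and some i < 2 such that I ⊆ B_i. -/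
/-- `u₀ = 1` and `u_{n+1} = C(2u_n + 1, 2) · u_n`. -/
def u : ℕ → ℕ
  | 0 => 1
  | n + 1 => Nat.choose (2 * u n + 1) 2 * u n

/-- The `n`-index set `𝓘_n`: `𝓘₀ = {ε}` and `𝓘_{n+1} = { x⌢ν : x ≤ 2u_n, ν ∈ 𝓘_n }`. -/
def indexSet : ℕ → Set (List ℕ)
  | 0 => {[]}
  | n + 1 => {l | ∃ x ν, x ≤ 2 * u n ∧ ν ∈ indexSet n ∧ l = x :: ν}

/-- `I` is an `n`-index: the unique 0-index is `{ε}`; an `(n+1)`-index is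
`{ x⌢ν : ν ∈ I } ∪ { y⌢ν : ν ∈ I }` for an `n`-index `I` and `x < y ≤ 2u_n`. -/
def IsIndex : ℕ → Set (List ℕ) → Prop
  | 0, J => J = {[]}
  | n + 1, J => ∃ I x y, IsIndex n I ∧ x < y ∧ y ≤ 2 * u n ∧
      J = (fun ν => x :: ν) '' I ∪ (fun ν => y :: ν) '' I

attribute [local instance] Classical.propDecidable

/-- The finset of ordered pairs `x < y < m`. -/
def pairsF (m : ℕ) : Finset (ℕ × ℕ) :=
  (Finset.range m ×ˢ Finset.range m).filter (fun p => p.1 < p.2)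

lemma pairsF_card (m : ℕ) : (pairsF m).card = m.choose 2 := by
  induction m with
  | zero => decide
  | succ m ih =>
    have hsplit : pairsF (m+1) = pairsF m ∪ (Finset.range m).image (fun x => (x, m)) := by
      ext ⟨a, b⟩
      simp only [pairsF, Finset.mem_filter, Finset.mem_product, Finset.mem_range,
        Finset.mem_union, Finset.mem_image, Prod.mk.injEq]
      constructor
      · rintro ⟨⟨ha, hb⟩, hab⟩
        by_cases hbm : b = m
        · right; exact ⟨a, by omega, rfl, hbm.symm⟩
        · left; exact ⟨⟨by omega, by omega⟩, hab⟩
      · rintro (⟨⟨ha, hb⟩, hab⟩ | ⟨x, hx, rfl, rfl⟩)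
        · exact ⟨⟨by omega, by omega⟩, hab⟩
        · exact ⟨⟨by omega, by omega⟩, hx⟩
    have hdisj : Disjoint (pairsF m) ((Finset.range m).image (fun x => (x, m))) := by
      rw [Finset.disjoint_left]
      rintro ⟨a, b⟩ hp hq
      simp only [pairsF, Finset.mem_filter, Finset.mem_product, Finset.mem_range] at hp
      simp only [Finset.mem_image, Finset.mem_range, Prod.mk.injEq] at hq
      obtain ⟨x, hx, rfl, rfl⟩ := hq
      omega
    rw [hsplit, Finset.card_union_of_disjoint hdisj, ih,
      Finset.card_image_of_injective _ (fun a b h => by simpa using (Prod.mk.injEq _ _ _ _ ▸ h).1),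
      Finset.card_range]
    have h2 : (m+1).choose 2 = m.choose 1 + m.choose 2 := Nat.choose_succ_succ m 1
    rw [h2, Nat.choose_one_right]
    omega

/-- A finset containing all `n`-indices. -/
noncomputable def indexFinset : ℕ → Finset (Set (List ℕ))
  | 0 => {({[]} : Set (List ℕ))}
  | n + 1 => (pairsF (2 * u n + 1) ×ˢ indexFinset n).image
      (fun q => (fun ν => q.1.1 :: ν) '' q.2 ∪ (fun ν => q.1.2 :: ν) '' q.2)

lemma mem_indexFinset : ∀ {n : ℕ} {I : Set (List ℕ)}, IsIndex n I → I ∈ indexFinset n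
  | 0, I, h => by simp only [indexFinset, Finset.mem_singleton]; exact h
  | n + 1, J, h => by
    obtain ⟨I, x, y, hI, hxy, hy, rfl⟩ := h
    simp only [indexFinset, Finset.mem_image]
    refine ⟨((x, y), I), Finset.mem_product.mpr ⟨?_, mem_indexFinset hI⟩, rfl⟩
    simp only [pairsF, Finset.mem_filter, Finset.mem_product, Finset.mem_range]
    omega

lemma card_indexFinset (n : ℕ) : (indexFinset n).card ≤ u n := by
  induction n with
  | zero => simp [indexFinset, u]
  | succ n ih =>
    calc (indexFinset (n+1)).card
        ≤ (pairsF (2 * u n + 1) ×ˢ indexFinset n).card := Finset.card_image_le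
      _ = (2 * u n + 1).choose 2 * (indexFinset n).card := by
          rw [Finset.card_product, pairsF_card]
      _ ≤ (2 * u n + 1).choose 2 * u n := Nat.mul_le_mul_left _ ih
      _ = u (n+1) := rfl

/-- For every `n` and every 2-cover `B₀ ∪ B₁ = 𝓘_n`, there is an `n`-index
`I ⊆ 𝓘_n` and a side `i < 2` such that `I ⊆ B_i`. -/
theorem stmt_11 (n : ℕ) (B0 B1 : Set (List ℕ)) (hcover : B0 ∪ B1 = indexSet n) :
    ∃ I : Set (List ℕ), IsIndex n I ∧ I ⊆ indexSet n ∧ (I ⊆ B0 ∨ I ⊆ B1) := by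
  induction n generalizing B0 B1 with
  | zero =>
    have h : ([] : List ℕ) ∈ B0 ∪ B1 := by rw [hcover]; exact rfl
    refine ⟨{[]}, rfl, subset_refl _, ?_⟩
    rcases h with h | h
    · exact Or.inl (fun l hl => by rw [Set.mem_singleton_iff] at hl; subst hl; exact h)
    · exact Or.inr (fun l hl => by rw [Set.mem_singleton_iff] at hl; subst hl; exact h)
  | succ n ih =>
    have key : ∀ x : ℕ, ∃ p : Set (List ℕ) × Bool, x ≤ 2 * u n →
        IsIndex n p.1 ∧ p.1 ⊆ indexSet n ∧
        (∀ ν ∈ p.1, (x :: ν) ∈ (if p.2 then B0 else B1)) := by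
      intro x
      by_cases hx : x ≤ 2 * u n
      · have hc : {ν | x :: ν ∈ B0} ∪ {ν | x :: ν ∈ B1} = indexSet n := by
          ext ν
          constructor
          · intro h
            have hmem : x :: ν ∈ indexSet (n+1) := by
              rw [← hcover]
              rcases h with h | h
              · exact Or.inl h
              · exact Or.inr h
            obtain ⟨x', ν', _, hν', heq⟩ := hmem
            obtain ⟨rfl, rfl⟩ : x = x' ∧ ν = ν' := by
              constructor <;> [exact (List.cons.injEq _ _ _ _ ▸ heq).1;
                exact (List.cons.injEq _ _ _ _ ▸ heq).2]
            exact hν'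
          · intro h
            have hmem : x :: ν ∈ indexSet (n+1) := ⟨x, ν, hx, h, rfl⟩
            rw [← hcover] at hmem
            rcases hmem with h' | h'
            · exact Or.inl h'
            · exact Or.inr h'
        obtain ⟨I, hI, hsub, hside⟩ := ih _ _ hc
        rcases hside with h | h
        · exact ⟨(I, true), fun _ => ⟨hI, hsub, fun ν hν => by simpa using h hν⟩⟩
        · exact ⟨(I, false), fun _ => ⟨hI, hsub, fun ν hν => by simpa using h hν⟩⟩
      · exact ⟨(∅, true), fun h => absurd h hx⟩
    choose p hp using key
    -- pigeonhole
    obtain ⟨a, ha, b, hb, hne, heq⟩ :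
        ∃ a ∈ Finset.range (2 * u n + 1), ∃ b ∈ Finset.range (2 * u n + 1),
          a ≠ b ∧ p a = p b := by
      apply Finset.exists_ne_map_eq_of_card_lt_of_maps_to (t := indexFinset n ×ˢ Finset.univ)
      · rw [Finset.card_range, Finset.card_product, Finset.card_univ, Fintype.card_bool]
        have := card_indexFinset n
        omega
      · intro x hx
        rw [Finset.mem_coe, Finset.mem_range] at hx
        exact Finset.mem_product.mpr ⟨mem_indexFinset (hp x (by omega)).1, Finset.mem_univ _⟩
    rw [Finset.mem_range] at ha hb
    obtain ⟨a, b, hab, hble, hpe⟩ : ∃ a b, a < b ∧ b ≤ 2 * u n ∧ p a = p b := by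
      rcases hne.lt_or_gt with h | h
      · exact ⟨a, b, h, by omega, heq⟩
      · exact ⟨b, a, h, by omega, heq.symm⟩
    have hale : a ≤ 2 * u n := by omega
    obtain ⟨hIa, hsuba, hsidea⟩ := hp a hale
    obtain ⟨hIb, hsubb, hsideb⟩ := hp b hble
    refine ⟨(fun ν => a :: ν) '' (p a).1 ∪ (fun ν => b :: ν) '' (p a).1,
      ⟨(p a).1, a, b, hIa, hab, hble, rfl⟩, ?_, ?_⟩
    · rintro l (⟨ν, hν, rfl⟩ | ⟨ν, hν, rfl⟩)
      · exact ⟨a, ν, hale, hsuba hν, rfl⟩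
      · exact ⟨b, ν, hble, hsuba hν, rfl⟩
    · have h1 : (p b).1 = (p a).1 := by rw [hpe]
      have h2 : (p b).2 = (p a).2 := by rw [hpe]
      rw [h1] at hsideb
      rw [h2] at hsideb
      cases hpa2 : (p a).2 with
      | true =>
        rw [hpa2] at hsidea hsideb
        simp only [if_true] at hsidea hsideb
        refine Or.inl ?_
        rintro l (⟨ν, hν, rfl⟩ | ⟨ν, hν, rfl⟩)
        · exact hsidea ν hν
        · exact hsideb ν hν
      | false =>
        rw [hpa2] at hsidea hsideb
        simp at hsidea hsideb
        refine Or.inr ?_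
        rintro l (⟨ν, hν, rfl⟩ | ⟨ν, hν, rfl⟩)
        · exact hsidea ν hν
        · exact hsideb ν hν
end

section
/- Let 𝒰_C ⊆ (I → 2^ω) be a largeness class and 𝒜 ⊆ π_J(𝒰_C) a largeness class over J → 2^ω, for J ⊆ I. Then the class 𝒟 of all ⟨X_ν : ν ∈ I⟩ ∈ 𝒰_C with ⟨X_ν : ν ∈ J⟩ ∈ 𝒜 is a largeness class over I → 2^ω with π_J(𝒟) = 𝒜 and 𝒟 ⊆ 𝒰_C. -/
lemma restr_combine {ι : Type} (p : ι → Prop) [DecidablePred p]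
    (XJ : {ν // p ν} → Set ℕ) (XC : {ν // ¬ p ν} → Set ℕ) :
    (fun ν : {ν // p ν} => combineTuple p XJ XC ν.1) = XJ := by
  funext ν
  simp [combineTuple, ν.2]

/-- If `𝒰_C ⊆ (I → 2^ω)` is a largeness class and `𝒜 ⊆ π_J(𝒰_C)` is a largeness
class over `J → 2^ω` (`J ⊆ I`), then the class `𝒟` of all `⟨X_ν : ν ∈ I⟩ ∈ 𝒰_C`
with `⟨X_ν : ν ∈ J⟩ ∈ 𝒜` is a largeness class over `I → 2^ω`, with
`π_J(𝒟) = 𝒜` and `𝒟 ⊆ 𝒰_C`. -/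
theorem stmt_16 {ι : Type} [Fintype ι] (p : ι → Prop) [DecidablePred p]
    (UC : Set (ι → Set ℕ)) (hUC : IsLargenessClass UC)
    (A : Set ({ν // p ν} → Set ℕ)) (hA : IsLargenessClass A)
    (hAincl : A ⊆ projClass p UC) :
    IsLargenessClass {X | X ∈ UC ∧ (fun ν : {ν // p ν} => X ν.1) ∈ A} ∧
      projClass p {X | X ∈ UC ∧ (fun ν : {ν // p ν} => X ν.1) ∈ A} = A ∧
      {X | X ∈ UC ∧ (fun ν : {ν // p ν} => X ν.1) ∈ A} ⊆ UC := by
  set D : Set (ι → Set ℕ) := {X | X ∈ UC ∧ (fun ν : {ν // p ν} => X ν.1) ∈ A} with hD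
  have hDlarge : IsLargenessClass D := by
    constructor
    · intro X Y hX hXY
      exact ⟨hUC.1 X Y hX.1 hXY, hA.1 _ _ hX.2 (fun ν => hXY ν.1)⟩
    · intro k Y hcov
      obtain ⟨fJ, hfJ⟩ := hA.2 k Y hcov
      have hXJ := hAincl hfJ
      obtain ⟨fC, hfC⟩ := hXJ.2 k Y hcov
      refine ⟨fun ν => if h : p ν then fJ ⟨ν, h⟩ else fC ⟨ν, h⟩, ?_, ?_⟩
      · have : (fun ν => Y (if h : p ν then fJ ⟨ν, h⟩ else fC ⟨ν, h⟩)) =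
            combineTuple p (fun ν => Y (fJ ν)) (fun ν => Y (fC ν)) := by
          funext ν
          by_cases h : p ν <;> simp [combineTuple, h]
        rw [this]; exact hfC
      · have : (fun ν : {ν // p ν} =>
            Y (if h : p ν.1 then fJ ⟨ν.1, h⟩ else fC ⟨ν.1, h⟩)) = fun ν => Y (fJ ν) := by
          funext ν
          simp [ν.2]
        rw [this]; exact hfJ
  refine ⟨hDlarge, ?_, fun X hX => hX.1⟩
  ext XJ
  constructor
  · intro hXJ
    have hcov : (⋃ j : Fin 1, (fun _ => (Set.univ : Set ℕ)) j) = Set.univ := by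
      simp [Set.iUnion_const]
    obtain ⟨f, hf⟩ := hXJ.2 1 (fun _ => Set.univ) hcov
    have := hf.2
    rwa [restr_combine] at this
  · intro hXJ
    have hXJUC := hAincl hXJ
    have heq : {XC : {ν // ¬ p ν} → Set ℕ | combineTuple p XJ XC ∈ D} =
        {XC : {ν // ¬ p ν} → Set ℕ | combineTuple p XJ XC ∈ UC} := by
      ext XC
      simp only [Set.mem_setOf_eq, hD, restr_combine]
      exact ⟨fun h => h.1, fun h => ⟨h, hXJ⟩⟩
    show IsLargenessClass _
    rw [heq]
    exact hXJUC
end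

section
/- If 𝒰_C is not a largeness class, where 𝒰_C = ⋂_{e ∈ C} 𝒰_e is an intersection of a countable family of upward-closed open (Σ⁰₁) classes indexed by C ⊆ ℕ, then there is a finite subset F ⊆ C such that 𝒰_F = ⋂_{e ∈ F} 𝒰_e is already not a largeness class. -/
/-- If `𝒰_C = ⋂_{e ∈ C} 𝒰_e` is not a largeness class, where each `𝒰_e` is an
upward-closed open (Σ⁰₁) class (generated by a predicate on tuples of finite
sets), then some finite subintersection `𝒰_F`, `F ⊆ C`, is already not a
largeness class. -/
theorem stmt_18 {ι : Type} [Fintype ι] (U : ℕ → Set (ι → Set ℕ))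
    (hopen : ∀ e, ∃ φ : (ι → Finset ℕ) → Prop,
      U e = {X | ∃ σ : ι → Finset ℕ, (∀ ν, (↑(σ ν) : Set ℕ) ⊆ X ν) ∧ φ σ})
    (hup : ∀ e, UpwardClosed (U e))
    (C : Set ℕ) (h : ¬ IsLargenessClass (⋂ e ∈ C, U e)) :
    ∃ F : Finset ℕ, ↑F ⊆ C ∧ ¬ IsLargenessClass (⋂ e ∈ F, U e) := by
  by_contra h'
  push_neg at h'
  apply h
  constructor
  · intro X Y hX hXY
    simp only [Set.mem_iInter] at hX ⊢
    exact fun e he => hup e X Y (hX e he) hXY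
  · intro k Y hY
    by_contra hno
    push_neg at hno
    have hex : ∀ f : ι → Fin k, ∃ e ∈ C, (fun ν => Y (f ν)) ∉ U e := by
      intro f
      have := hno f
      simp only [Set.mem_iInter, not_forall] at this
      obtain ⟨e, he, hne⟩ := this
      exact ⟨e, he, hne⟩
    choose e heC hne using hex
    haveI : DecidableEq ι := Classical.decEq ι
    set F : Finset ℕ := (Finset.univ : Finset (ι → Fin k)).image e with hF
    have hFC : (↑F : Set ℕ) ⊆ C := by
      intro x hx
      simp only [hF, Finset.coe_image, Finset.coe_univ, Set.image_univ,
        Set.mem_range] at hx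
      obtain ⟨f, rfl⟩ := hx
      exact heC f
    obtain ⟨f, hf⟩ := (h' F hFC).2 k Y hY
    simp only [Set.mem_iInter] at hf
    exact hne f (hf (e f) (by simp [hF]))
end
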